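/- arXiv:1508.03076 — 3 statements merged into one kernel-verified Lean document; each statement's English description precedes it below -/
import Mathlib

section
/- Let 0 < s < 1/2. Define for (ξ₁,ξ₂,ξ₃,ξ₄) ∈ ℤ⁴ with ξ₁+ξ₂+ξ₃+ξ₄ = 0 and (ξ₁+ξ₄)(ξ₃+ξ₄) ≠ 0 the multiplier M₄(ξ̄) = (ξ₁⟨ξ₃⟩^{2s} + ξ₂⟨ξ₄⟩^{2s} + ξ₃⟨ξ₁⟩^{2s} + ξ₄⟨ξ₂⟩^{2s}) / ((ξ₁+ξ₄)(ξ₃+ξ₄)). Let N₍₁₎ denote the largest of |ξ₁|,...,|ξ₄|. If N₍₁₎ ≤ C·min{|ξ₁+ξ₄|, |ξ₃+ξ₄|} for some constant C, then |M₄(ξ̄)| ≤ C'·⟨N₍₁₎⟩^{2s-1}, where C' depends only on s and C. -/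
open Real

/-- Japanese bracket ⟨x⟩ = (1+x²)^{1/2}. -/
noncomputable def jb (x : ℝ) : ℝ := Real.sqrt (1 + x ^ 2)

/-- The multiplier M₄(ξ̄) with weight ⟨ξ⟩^{2s} = (1+ξ²)^s. -/
noncomputable def M4 (s : ℝ) (ξ₁ ξ₂ ξ₃ ξ₄ : ℤ) : ℝ :=
  ((ξ₁ : ℝ) * (1 + (ξ₃ : ℝ) ^ 2) ^ s + (ξ₂ : ℝ) * (1 + (ξ₄ : ℝ) ^ 2) ^ s
      + (ξ₃ : ℝ) * (1 + (ξ₁ : ℝ) ^ 2) ^ s + (ξ₄ : ℝ) * (1 + (ξ₂ : ℝ) ^ 2) ^ s)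
    / (((ξ₁ : ℝ) + ξ₄) * ((ξ₃ : ℝ) + ξ₄))

/-! The numerator of `M4` is at most `4 N ⟨N⟩^{2s}` term by term; as `ξ₁ + ξ₄` is a
nonzero integer, `N ≥ 1`, so this is `≲ N² ⟨N⟩^{2s-1}`; the hypothesis `N ≤ C min(|ξ₁+ξ₄|, |ξ₃+ξ₄|)` makes the denominator
at least `N² / C²`. -/

lemma jb_pos (x : ℝ) : 0 < jb x :=
  Real.sqrt_pos.mpr (by positivity)

lemma jb_le_two_mul {x : ℝ} (hx : 1 ≤ x) : jb x ≤ 2 * x := by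
  rw [jb, Real.sqrt_le_left (by linarith)]
  nlinarith

lemma one_add_sq_rpow_eq_jb_rpow (x s : ℝ) : (1 + x ^ 2) ^ s = jb x ^ (2 * s) := by
  rw [jb, Real.sqrt_eq_rpow, ← Real.rpow_mul (by positivity)]
  ring_nf

lemma one_add_sq_rpow_le_two_mul_jb_rpow {x : ℝ} (hx : 1 ≤ x) (s : ℝ) :
    (1 + x ^ 2) ^ s ≤ 2 * x * jb x ^ (2 * s - 1) := by
  have hsplit : jb x ^ (2 * s) = jb x ^ (2 * s - 1) * jb x := by
    rw [← Real.rpow_add_one (jb_pos x).ne']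
    ring_nf
  rw [one_add_sq_rpow_eq_jb_rpow, hsplit, mul_comm]
  exact mul_le_mul_of_nonneg_right (jb_le_two_mul hx) (Real.rpow_pos_of_pos (jb_pos x) _).le

lemma abs_mul_one_add_sq_rpow_le {x y N s : ℝ} (hs : 0 ≤ s) (hx : |x| ≤ N) (hy : |y| ≤ N) :
    |x * (1 + y ^ 2) ^ s| ≤ N * (1 + N ^ 2) ^ s := by
  have hyN : y ^ 2 ≤ N ^ 2 := sq_le_sq' (abs_le.mp hy).1 (abs_le.mp hy).2
  rw [abs_mul, abs_of_nonneg (Real.rpow_nonneg (by positivity) s)]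
  exact mul_le_mul hx (by gcongr) (by positivity) ((abs_nonneg x).trans hx)

lemma abs_M4_numerator_le {a b c d N s : ℝ} (hs : 0 ≤ s) (hN : 1 ≤ N)
    (ha : |a| ≤ N) (hb : |b| ≤ N) (hc : |c| ≤ N) (hd : |d| ≤ N) :
    |a * (1 + c ^ 2) ^ s + b * (1 + d ^ 2) ^ s + c * (1 + a ^ 2) ^ s + d * (1 + b ^ 2) ^ s|
      ≤ 8 * N ^ 2 * jb N ^ (2 * s - 1) := by
  have hsum : |a * (1 + c ^ 2) ^ s + b * (1 + d ^ 2) ^ s + c * (1 + a ^ 2) ^ s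
      + d * (1 + b ^ 2) ^ s| ≤ 4 * (N * (1 + N ^ 2) ^ s) := by
    have := abs_add_le (a * (1 + c ^ 2) ^ s) (b * (1 + d ^ 2) ^ s)
    have := abs_add_le (a * (1 + c ^ 2) ^ s + b * (1 + d ^ 2) ^ s) (c * (1 + a ^ 2) ^ s)
    have := abs_add_le (a * (1 + c ^ 2) ^ s + b * (1 + d ^ 2) ^ s + c * (1 + a ^ 2) ^ s)
      (d * (1 + b ^ 2) ^ s)
    linarith [abs_mul_one_add_sq_rpow_le hs ha hc, abs_mul_one_add_sq_rpow_le hs hb hd,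
      abs_mul_one_add_sq_rpow_le hs hc ha, abs_mul_one_add_sq_rpow_le hs hd hb]
  calc _ ≤ 4 * (N * (1 + N ^ 2) ^ s) := hsum
    _ ≤ 4 * (N * (2 * N * jb N ^ (2 * s - 1))) := by
        gcongr
        exact one_add_sq_rpow_le_two_mul_jb_rpow hN s
    _ = 8 * N ^ 2 * jb N ^ (2 * s - 1) := by ring

lemma abs_M4_le {s C N : ℝ} {ξ₁ ξ₂ ξ₃ ξ₄ : ℤ} (hs : 0 ≤ s) (hN : 1 ≤ N)
    (h₁ : |(ξ₁ : ℝ)| ≤ N) (h₂ : |(ξ₂ : ℝ)| ≤ N) (h₃ : |(ξ₃ : ℝ)| ≤ N) (h₄ : |(ξ₄ : ℝ)| ≤ N)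
    (h₁₄ : N ≤ C * |(ξ₁ : ℝ) + ξ₄|) (h₃₄ : N ≤ C * |(ξ₃ : ℝ) + ξ₄|) :
    |M4 s ξ₁ ξ₂ ξ₃ ξ₄| ≤ 8 * C ^ 2 * jb N ^ (2 * s - 1) := by
  have hden : N ^ 2 ≤ C ^ 2 * (|(ξ₁ : ℝ) + ξ₄| * |(ξ₃ : ℝ) + ξ₄|) := by
    have := mul_le_mul h₁₄ h₃₄ (by linarith) (by linarith)
    linarith
  have hden_pos : 0 < |(ξ₁ : ℝ) + ξ₄| * |(ξ₃ : ℝ) + ξ₄| := by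
    by_contra! h
    nlinarith [sq_nonneg C]
  rw [M4, abs_div, abs_mul, div_le_iff₀ hden_pos]
  calc _ ≤ 8 * N ^ 2 * jb N ^ (2 * s - 1) := abs_M4_numerator_le hs hN h₁ h₂ h₃ h₄
    _ ≤ 8 * (C ^ 2 * (|(ξ₁ : ℝ) + ξ₄| * |(ξ₃ : ℝ) + ξ₄|)) * jb N ^ (2 * s - 1) := by
        have := Real.rpow_pos_of_pos (jb_pos N) (2 * s - 1)
        gcongr
    _ = _ := by ring

theorem stmt_4_general (s : ℝ) (hs0 : 0 < s) (C : ℝ) (hC : 0 < C) :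
    ∃ C' : ℝ, 0 < C' ∧ ∀ ξ₁ ξ₂ ξ₃ ξ₄ : ℤ,
      ξ₁ + ξ₂ + ξ₃ + ξ₄ = 0 → ((ξ₁ : ℝ) + ξ₄) * ((ξ₃ : ℝ) + ξ₄) ≠ 0 →
      max (max |(ξ₁ : ℝ)| |(ξ₂ : ℝ)|) (max |(ξ₃ : ℝ)| |(ξ₄ : ℝ)|)
          ≤ C * min |(ξ₁ : ℝ) + ξ₄| |(ξ₃ : ℝ) + ξ₄| →
      |M4 s ξ₁ ξ₂ ξ₃ ξ₄|
        ≤ C' * jb (max (max |(ξ₁ : ℝ)| |(ξ₂ : ℝ)|) (max |(ξ₃ : ℝ)| |(ξ₄ : ℝ)|))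
              ^ (2 * s - 1) := by
  refine ⟨8 * C ^ 2, by positivity, fun ξ₁ ξ₂ ξ₃ ξ₄ _ hne hN => ?_⟩
  set N := max (max |(ξ₁ : ℝ)| |(ξ₂ : ℝ)|) (max |(ξ₃ : ℝ)| |(ξ₄ : ℝ)|)
  have h₁ : |(ξ₁ : ℝ)| ≤ N := (le_max_left _ _).trans (le_max_left _ _)
  have h₂ : |(ξ₂ : ℝ)| ≤ N := (le_max_right _ _).trans (le_max_left _ _)
  have h₃ : |(ξ₃ : ℝ)| ≤ N := (le_max_left _ _).trans (le_max_right _ _)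
  have h₄ : |(ξ₄ : ℝ)| ≤ N := (le_max_right _ _).trans (le_max_right _ _)
  have hN_one : 1 ≤ N := by
    have h₁₄ : ξ₁ ≠ 0 ∨ ξ₄ ≠ 0 := by
      by_contra! h
      exact hne (by simp [h.1, h.2])
    rcases h₁₄ with h | h
    · exact le_trans (by exact_mod_cast Int.one_le_abs h) h₁
    · exact le_trans (by exact_mod_cast Int.one_le_abs h) h₄
  exact abs_M4_le hs0.le hN_one h₁ h₂ h₃ h₄
    (hN.trans (by gcongr; exact min_le_left _ _))
    (hN.trans (by gcongr; exact min_le_right _ _))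

/-- Case (i), first subcase, of the pointwise multiplier estimate for M₄:
if the largest frequency is dominated by both |ξ₁+ξ₄| and |ξ₃+ξ₄|, then
|M₄| ≲ ⟨N₍₁₎⟩^{2s-1}. -/
theorem stmt_4 (s : ℝ) (hs0 : 0 < s) (hs : s < 1 / 2) (C : ℝ) (hC : 0 < C) :
    ∃ C' : ℝ, 0 < C' ∧ ∀ ξ₁ ξ₂ ξ₃ ξ₄ : ℤ,
      ξ₁ + ξ₂ + ξ₃ + ξ₄ = 0 → ((ξ₁ : ℝ) + ξ₄) * ((ξ₃ : ℝ) + ξ₄) ≠ 0 →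
      max (max |(ξ₁ : ℝ)| |(ξ₂ : ℝ)|) (max |(ξ₃ : ℝ)| |(ξ₄ : ℝ)|)
          ≤ C * min |(ξ₁ : ℝ) + ξ₄| |(ξ₃ : ℝ) + ξ₄| →
      |M4 s ξ₁ ξ₂ ξ₃ ξ₄|
        ≤ C' * jb (max (max |(ξ₁ : ℝ)| |(ξ₂ : ℝ)|) (max |(ξ₃ : ℝ)| |(ξ₄ : ℝ)|))
              ^ (2 * s - 1) :=
  stmt_4_general s hs0 C hC
end

section
/- Let 0 < s < 1/2 and let M₄ be as above on the hyperplane ξ₁+ξ₂+ξ₃+ξ₄ = 0 with (ξ₁+ξ₄)(ξ₃+ξ₄) ≠ 0. Let N₍₁₎ ≥ N₍₂₎ ≥ N₍₃₎ ≥ N₍₄₎ denote the decreasing rearrangement of |ξ₁|,|ξ₂|,|ξ₃|,|ξ₄|. If N₍₁₎ ≥ c⁻¹·max{|ξ₁+ξ₄|,|ξ₃+ξ₄|} for a sufficiently large constant c⁻¹ (i.e. N₍₁₎ ≫ max{|ξ₁+ξ₄|,|ξ₃+ξ₄|}), then |M₄(ξ̄)| ≤ C·⟨N₍₁₎⟩^{2s-1},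 with C depending only on s. -/
/-!
Write `u = ξ₄`, `a = ξ₁ + ξ₄`, `b = ξ₃ + ξ₄`. Because the weight `⟨x⟩^{2s}` is even, the numerator
of `M₄`, viewed as a function of `(a, b)` for fixed `u`, vanishes on `a = 0`, and its `a`-derivative
vanishes on `b = 0`. The double mean value theorem therefore bounds it by `|a| |b|` times the
supremum of its mixed derivative over `[0, a] × [0, b]`, which cancels the denominator `a b`.
That mixed derivative is `w'(b - u) + w'(a - u) + u w''(u - a - b)` with `w = ⟨·⟩^{2s}`; when
`|a|, |b| ≪ N₍₁₎` all three arguments have size `≳ N₍₁₎` and `|u| ≲ N₍₁₎`, so each term is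
`O(⟨N₍₁₎⟩^{2s-1})`.
-/

open Real

open Set

theorem abs_le_mul_abs_of_hasDerivAt_of_abs_le {f f' : ℝ → ℝ} {a C : ℝ} (hf0 : f 0 = 0)
    (hf : ∀ x ∈ uIcc 0 a, HasDerivAt f (f' x) x) (hC : ∀ x ∈ uIcc 0 a, |f' x| ≤ C) :
    |f a| ≤ C * |a| := by
  have := (convex_uIcc (0 : ℝ) a).norm_image_sub_le_of_norm_hasDerivWithin_le
    (fun x hx => (hf x hx).hasDerivWithinAt) hC left_mem_uIcc right_mem_uIcc
  simpa [hf0] using this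

theorem abs_le_mul_abs_mul_abs_of_mixed_deriv {F Fα Fαβ : ℝ → ℝ → ℝ} {a b C : ℝ}
    (hF : F 0 b = 0) (hFα : ∀ α, Fα α 0 = 0)
    (hdα : ∀ α, HasDerivAt (F · b) (Fα α b) α)
    (hdβ : ∀ α β, HasDerivAt (Fα α ·) (Fαβ α β) β)
    (hC : ∀ α ∈ uIcc 0 a, ∀ β ∈ uIcc 0 b, |Fαβ α β| ≤ C) :
    |F a b| ≤ C * |b| * |a| :=
  abs_le_mul_abs_of_hasDerivAt_of_abs_le hF (fun α _ => hdα α) fun α hα =>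
    abs_le_mul_abs_of_hasDerivAt_of_abs_le (hFα α) (fun β _ => hdβ α β) (hC α hα)

noncomputable def bracketPow (s x : ℝ) : ℝ := (1 + x ^ 2) ^ s

noncomputable def bracketPowDeriv (s x : ℝ) : ℝ := 2 * s * x * (1 + x ^ 2) ^ (s - 1)

noncomputable def bracketPowDeriv2 (s x : ℝ) : ℝ :=
  2 * s * (1 + x ^ 2) ^ (s - 2) * (1 + (2 * s - 1) * x ^ 2)

section bracketPow

variable {s x : ℝ}

theorem bracketPow_neg (s x : ℝ) : bracketPow s (-x) = bracketPow s x := by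
  simp [bracketPow]

theorem bracketPowDeriv_neg (s x : ℝ) : bracketPowDeriv s (-x) = -bracketPowDeriv s x := by
  simp only [bracketPowDeriv, neg_sq]; ring

theorem hasDerivAt_bracketPow (s x : ℝ) :
    HasDerivAt (bracketPow s) (bracketPowDeriv s x) x := by
  have h := ((hasDerivAt_pow 2 x).const_add 1).rpow_const (p := s) (Or.inl (by positivity))
  refine h.congr_deriv ?_
  simp only [bracketPowDeriv, Nat.cast_ofNat, Nat.add_one_sub_one, pow_one]; ring

theorem hasDerivAt_bracketPowDeriv (s x : ℝ) :
    HasDerivAt (bracketPowDeriv s) (bracketPowDeriv2 s x) x := by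
  have hpos : (0 : ℝ) < 1 + x ^ 2 := by positivity
  have h := ((hasDerivAt_id x).const_mul (2 * s)).mul
    (((hasDerivAt_pow 2 x).const_add 1).rpow_const (p := s - 1) (Or.inl hpos.ne'))
  refine h.congr_deriv ?_
  have h1 : (1 + x ^ 2) ^ (s - 1) = (1 + x ^ 2) ^ (s - 2) * (1 + x ^ 2) := by
    rw [← rpow_add_one hpos.ne']; ring_nf
  simp only [bracketPowDeriv2, id, h1, show s - 1 - 1 = s - 2 by ring, Nat.cast_ofNat,
    Nat.add_one_sub_one, pow_one]
  ring

theorem abs_bracketPowDeriv_le (hs : 0 ≤ s) :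
    |bracketPowDeriv s x| ≤ 2 * s * (1 + x ^ 2) ^ (s - 1 / 2) := by
  have hpos : (0 : ℝ) < 1 + x ^ 2 := by positivity
  have hx : |x| ≤ (1 + x ^ 2) ^ (1 / 2 : ℝ) := by
    rw [← sqrt_eq_rpow]; exact abs_le_sqrt (by linarith)
  have hsplit : (1 + x ^ 2) ^ (s - 1 / 2) = (1 + x ^ 2) ^ (1 / 2 : ℝ) * (1 + x ^ 2) ^ (s - 1) := by
    rw [← rpow_add hpos]; ring_nf
  rw [hsplit, bracketPowDeriv, abs_mul, abs_mul, abs_of_nonneg (by positivity : 0 ≤ 2 * s),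
    abs_of_pos (rpow_pos_of_pos hpos _), ← mul_assoc]
  gcongr

theorem abs_bracketPowDeriv2_le (hs0 : 0 ≤ s) (hs1 : s ≤ 1) :
    |bracketPowDeriv2 s x| ≤ 2 * s * (1 + x ^ 2) ^ (s - 1) := by
  have hpos : (0 : ℝ) < 1 + x ^ 2 := by positivity
  have h1 : (1 + x ^ 2) ^ (s - 1) = (1 + x ^ 2) ^ (s - 2) * (1 + x ^ 2) := by
    rw [← rpow_add_one hpos.ne']; ring_nf
  have hfac : |1 + (2 * s - 1) * x ^ 2| ≤ 1 + x ^ 2 :=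
    abs_le.2 ⟨by nlinarith [sq_nonneg x], by nlinarith [sq_nonneg x]⟩
  rw [h1, bracketPowDeriv2, abs_mul, abs_of_nonneg (by positivity), ← mul_assoc]
  gcongr

theorem one_add_sq_rpow_le_of_half_le_abs {M e : ℝ} (hM : 0 ≤ M) (hx : M / 2 ≤ |x|)
    (he : e ≤ 0) (he' : -1 ≤ e) : (1 + x ^ 2) ^ e ≤ 4 * (1 + M ^ 2) ^ e := by
  have hbase : (1 + M ^ 2) * 4⁻¹ ≤ 1 + x ^ 2 := by
    nlinarith [sq_abs x, mul_self_le_mul_self (by linarith : (0 : ℝ) ≤ M / 2) hx]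
  have h4 : (4⁻¹ : ℝ) ^ e ≤ 4 := by
    calc (4⁻¹ : ℝ) ^ e ≤ (4⁻¹ : ℝ) ^ (-1 : ℝ) :=
          rpow_le_rpow_of_exponent_ge (by norm_num) (by norm_num) he'
      _ = 4 := by rw [rpow_neg_one, inv_inv]
  calc (1 + x ^ 2) ^ e ≤ ((1 + M ^ 2) * 4⁻¹) ^ e := rpow_le_rpow_of_nonpos (by positivity) hbase he
    _ = (1 + M ^ 2) ^ e * (4⁻¹ : ℝ) ^ e := mul_rpow (by positivity) (by norm_num)
    _ ≤ (1 + M ^ 2) ^ e * 4 := by gcongr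
    _ = 4 * (1 + M ^ 2) ^ e := mul_comm _ _

end bracketPow

section scale

variable {s M x : ℝ}

theorem abs_bracketPowDeriv_le_of_half_le_abs (hs0 : 0 ≤ s) (hs : s ≤ 1 / 2) (hM : 0 ≤ M)
    (hx : M / 2 ≤ |x|) : |bracketPowDeriv s x| ≤ 8 * s * (1 + M ^ 2) ^ (s - 1 / 2) :=
  calc |bracketPowDeriv s x| ≤ 2 * s * (1 + x ^ 2) ^ (s - 1 / 2) := abs_bracketPowDeriv_le hs0
    _ ≤ 2 * s * (4 * (1 + M ^ 2) ^ (s - 1 / 2)) := by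
      gcongr; exact one_add_sq_rpow_le_of_half_le_abs hM hx (by linarith) (by linarith)
    _ = 8 * s * (1 + M ^ 2) ^ (s - 1 / 2) := by ring

theorem abs_mul_bracketPowDeriv2_le_of_half_le_abs {u : ℝ} (hs0 : 0 ≤ s) (hs : s ≤ 1 / 2)
    (hu : |u| ≤ M) (hx : M / 2 ≤ |x|) :
    |u * bracketPowDeriv2 s x| ≤ 8 * s * (1 + M ^ 2) ^ (s - 1 / 2) := by
  have hM : 0 ≤ M := (abs_nonneg u).trans hu
  have hu' : |u| ≤ (1 + M ^ 2) ^ (1 / 2 : ℝ) := by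
    rw [← sqrt_eq_rpow]; exact hu.trans (le_sqrt_of_sq_le (by linarith))
  have hsplit : (1 + M ^ 2) ^ (s - 1 / 2) = (1 + M ^ 2) ^ (1 / 2 : ℝ) * (1 + M ^ 2) ^ (s - 1) := by
    rw [← rpow_add (by positivity)]; ring_nf
  calc |u * bracketPowDeriv2 s x| = |u| * |bracketPowDeriv2 s x| := abs_mul _ _
    _ ≤ (1 + M ^ 2) ^ (1 / 2 : ℝ) * (2 * s * (4 * (1 + M ^ 2) ^ (s - 1))) := by
      gcongr
      calc |bracketPowDeriv2 s x| ≤ 2 * s * (1 + x ^ 2) ^ (s - 1) :=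
            abs_bracketPowDeriv2_le hs0 (by linarith)
        _ ≤ 2 * s * (4 * (1 + M ^ 2) ^ (s - 1)) := by
          gcongr; exact one_add_sq_rpow_le_of_half_le_abs hM hx (by linarith) (by linarith)
    _ = 8 * s * (1 + M ^ 2) ^ (s - 1 / 2) := by rw [hsplit]; ring

end scale

/-- The numerator of `M4` in the coordinates `u = ξ₄`, `α = ξ₁ + ξ₄`, `β = ξ₃ + ξ₄`. -/
noncomputable def M4Num (s u α β : ℝ) : ℝ :=
  (α - u) * bracketPow s (β - u) + (u - α - β) * bracketPow s u
    + (β - u) * bracketPow s (α - u) + u * bracketPow s (u - α - β)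

noncomputable def M4NumDerivFst (s u α β : ℝ) : ℝ :=
  bracketPow s (β - u) - bracketPow s u + (β - u) * bracketPowDeriv s (α - u)
    - u * bracketPowDeriv s (u - α - β)

noncomputable def M4NumMixedDeriv (s u α β : ℝ) : ℝ :=
  bracketPowDeriv s (β - u) + bracketPowDeriv s (α - u) + u * bracketPowDeriv2 s (u - α - β)

section M4Num

variable (s u : ℝ)

theorem M4Num_zero_left (β : ℝ) : M4Num s u 0 β = 0 := by
  rw [M4Num, show (0 : ℝ) - u = -u by ring, show u - 0 - β = -(β - u) by ring,
    bracketPow_neg, bracketPow_neg]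
  ring

theorem M4NumDerivFst_zero_right (α : ℝ) : M4NumDerivFst s u α 0 = 0 := by
  rw [M4NumDerivFst, show (0 : ℝ) - u = -u by ring, show u - α - 0 = -(α - u) by ring,
    bracketPow_neg, bracketPowDeriv_neg]
  ring

theorem hasDerivAt_M4Num_fst (α β : ℝ) :
    HasDerivAt (M4Num s u · β) (M4NumDerivFst s u α β) α := by
  have h₁ : HasDerivAt (fun α : ℝ => α - u) 1 α := (hasDerivAt_id α).sub_const u
  have h₂ : HasDerivAt (fun α : ℝ => u - α - β) (-1) α := by
    simpa using ((hasDerivAt_id α).const_sub u).sub_const β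
  have h := (((h₁.mul_const (bracketPow s (β - u))).add (h₂.mul_const (bracketPow s u))).add
    (((hasDerivAt_bracketPow s (α - u)).comp α h₁).const_mul (β - u))).add
    (((hasDerivAt_bracketPow s (u - α - β)).comp α h₂).const_mul u)
  exact h.congr_deriv (by rw [M4NumDerivFst]; ring)

theorem hasDerivAt_M4NumDerivFst_snd (α β : ℝ) :
    HasDerivAt (M4NumDerivFst s u α ·) (M4NumMixedDeriv s u α β) β := by
  have h₁ : HasDerivAt (fun β : ℝ => β - u) 1 β := (hasDerivAt_id β).sub_const u
  have h₂ : HasDerivAt (fun β : ℝ => u - α - β) (-1) β := by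
    simpa using (hasDerivAt_id β).const_sub (u - α)
  have h := ((((hasDerivAt_bracketPow s (β - u)).comp β h₁).sub_const (bracketPow s u)).add
    (h₁.mul_const (bracketPowDeriv s (α - u)))).sub
    (((hasDerivAt_bracketPowDeriv s (u - α - β)).comp β h₂).const_mul u)
  exact h.congr_deriv (by rw [M4NumMixedDeriv]; ring)

theorem abs_M4NumMixedDeriv_le {M α β : ℝ} (hs0 : 0 ≤ s) (hs : s ≤ 1 / 2) (hu : |u| ≤ M)
    (hα : M / 2 ≤ |α - u|) (hβ : M / 2 ≤ |β - u|) (hαβ : M / 2 ≤ |u - α - β|) :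
    |M4NumMixedDeriv s u α β| ≤ 24 * s * (1 + M ^ 2) ^ (s - 1 / 2) := by
  have hM : 0 ≤ M := (abs_nonneg u).trans hu
  have h₁ := abs_bracketPowDeriv_le_of_half_le_abs hs0 hs hM hβ
  have h₂ := abs_bracketPowDeriv_le_of_half_le_abs hs0 hs hM hα
  have h₃ := abs_mul_bracketPowDeriv2_le_of_half_le_abs hs0 hs hu hαβ
  rw [M4NumMixedDeriv]
  linarith [abs_add_three (bracketPowDeriv s (β - u)) (bracketPowDeriv s (α - u))
    (u * bracketPowDeriv2 s (u - α - β))]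

theorem abs_M4Num_le {M a b : ℝ} (hs0 : 0 ≤ s) (hs : s ≤ 1 / 2) (hu : |u| ≤ M)
    (hM : 8 * max |a| |b| ≤ M) (hMu : M ≤ |u| + 2 * max |a| |b|) :
    |M4Num s u a b| ≤ 24 * s * (1 + M ^ 2) ^ (s - 1 / 2) * |b| * |a| := by
  refine abs_le_mul_abs_mul_abs_of_mixed_deriv (M4Num_zero_left s u b)
    (M4NumDerivFst_zero_right s u) (hasDerivAt_M4Num_fst s u · b)
    (hasDerivAt_M4NumDerivFst_snd s u) fun α hα β hβ => ?_
  have hα' : |α| ≤ max |a| |b| := by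
    simpa using (abs_sub_left_of_mem_uIcc hα).trans (le_max_left _ _)
  have hβ' : |β| ≤ max |a| |b| := by
    simpa using (abs_sub_left_of_mem_uIcc hβ).trans (le_max_right _ _)
  -- `|u| ≥ M - 2 max |a| |b|`, so the three arguments stay at distance `≥ M / 2` from the origin.
  refine abs_M4NumMixedDeriv_le s u hs0 hs hu ?_ ?_ ?_
  · linarith [abs_sub_abs_le_abs_sub u α, abs_sub_comm u α]
  · linarith [abs_sub_abs_le_abs_sub u β, abs_sub_comm u β]
  · rw [sub_sub]
    linarith [abs_sub_abs_le_abs_sub u (α + β), abs_add_le α β]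

end M4Num

theorem M4_eq_M4Num_div (s : ℝ) {ξ₁ ξ₂ ξ₃ ξ₄ : ℤ} (h : (ξ₁ : ℝ) + ξ₂ + ξ₃ + ξ₄ = 0) :
    M4 s ξ₁ ξ₂ ξ₃ ξ₄
      = M4Num s ξ₄ (ξ₁ + ξ₄) (ξ₃ + ξ₄) / (((ξ₁ : ℝ) + ξ₄) * ((ξ₃ : ℝ) + ξ₄)) := by
  have h₂ : (ξ₄ : ℝ) - (ξ₁ + ξ₄) - (ξ₃ + ξ₄) = ξ₂ := by linarith
  rw [M4, M4Num, h₂]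
  simp only [bracketPow, add_sub_cancel_right]

theorem max_abs_le_abs_add_two_mul_max {ξ₁ ξ₂ ξ₃ ξ₄ : ℝ} (h : ξ₁ + ξ₂ + ξ₃ + ξ₄ = 0) :
    max (max |ξ₁| |ξ₂|) (max |ξ₃| |ξ₄|) ≤ |ξ₄| + 2 * max |ξ₁ + ξ₄| |ξ₃ + ξ₄| := by
  have ha := le_max_left |ξ₁ + ξ₄| |ξ₃ + ξ₄|
  have hb := le_max_right |ξ₁ + ξ₄| |ξ₃ + ξ₄|
  have h₁ : |ξ₁| ≤ |ξ₁ + ξ₄| + |ξ₄| := by simpa using abs_sub (ξ₁ + ξ₄) ξ₄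
  have h₃ : |ξ₃| ≤ |ξ₃ + ξ₄| + |ξ₄| := by simpa using abs_sub (ξ₃ + ξ₄) ξ₄
  have h₂ : |ξ₂| ≤ |ξ₄| + |ξ₁ + ξ₄| + |ξ₃ + ξ₄| := by
    rw [show ξ₂ = ξ₄ - (ξ₁ + ξ₄) - (ξ₃ + ξ₄) by linarith]
    exact (abs_sub _ _).trans (by linarith [abs_sub ξ₄ (ξ₁ + ξ₄)])
  refine max_le (max_le ?_ ?_) (max_le ?_ ?_) <;> linarith [abs_nonneg (ξ₁ + ξ₄)]

theorem jb_rpow_two_mul_sub_one (s x : ℝ) : jb x ^ (2 * s - 1) = (1 + x ^ 2) ^ (s - 1 / 2) := by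
  rw [jb, sqrt_eq_rpow, ← rpow_mul (by positivity)]
  ring_nf

/-- Case (i), second subcase: if the largest frequency is much bigger than
both |ξ₁+ξ₄| and |ξ₃+ξ₄| (i.e. N₍₁₎ ≥ K·max{|ξ₁+ξ₄|,|ξ₃+ξ₄|} for a
sufficiently large constant K), then |M₄| ≲ ⟨N₍₁₎⟩^{2s-1}. -/
theorem stmt_5 (s : ℝ) (hs0 : 0 < s) (hs : s < 1 / 2) :
    ∃ K C : ℝ, 0 < K ∧ 0 < C ∧ ∀ ξ₁ ξ₂ ξ₃ ξ₄ : ℤ,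
      ξ₁ + ξ₂ + ξ₃ + ξ₄ = 0 → ((ξ₁ : ℝ) + ξ₄) * ((ξ₃ : ℝ) + ξ₄) ≠ 0 →
      K * max |(ξ₁ : ℝ) + ξ₄| |(ξ₃ : ℝ) + ξ₄|
          ≤ max (max |(ξ₁ : ℝ)| |(ξ₂ : ℝ)|) (max |(ξ₃ : ℝ)| |(ξ₄ : ℝ)|) →
      |M4 s ξ₁ ξ₂ ξ₃ ξ₄|
        ≤ C * jb (max (max |(ξ₁ : ℝ)| |(ξ₂ : ℝ)|) (max |(ξ₃ : ℝ)| |(ξ₄ : ℝ)|))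
              ^ (2 * s - 1) := by
  refine ⟨8, 24 * s, by norm_num, by positivity, fun ξ₁ ξ₂ ξ₃ ξ₄ hsum hden hK => ?_⟩
  have hsumR : (ξ₁ : ℝ) + ξ₂ + ξ₃ + ξ₄ = 0 := by exact_mod_cast hsum
  rw [M4_eq_M4Num_div s hsumR, abs_div, div_le_iff₀ (abs_pos.2 hden), jb_rpow_two_mul_sub_one,
    abs_mul, ← mul_assoc, mul_right_comm _ |_|]
  exact abs_M4Num_le s ξ₄ hs0.le hs.le ((le_max_right _ _).trans (le_max_right _ _)) hK
    (max_abs_le_abs_add_two_mul_max hsumR)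
end

section
/- Let 0 < s < 1/2 and suppose ξ₁+ξ₂+ξ₃+ξ₄ = 0 with |ξ₁| ∼ |ξ₂| ≥ max{|ξ₃|,|ξ₄|}, |ξ₁+ξ₄| ≥ c|ξ₁| and |ξ₃+ξ₄| ≤ c'|ξ₁| for suitable constants (i.e. |ξ₁+ξ₄| ≳ |ξ₁| ≫ |ξ₃+ξ₄|, with ξ₃+ξ₄ ≠ 0). Then | (ξ₁+ξ₂)⟨ξ₃⟩^{2s} + (ξ₃+ξ₄)⟨ξ₁⟩^{2s} + ξ₄(⟨ξ₂⟩^{2s}-⟨ξ₁⟩^{2s}) | / (|ξ₁+ξ₄|·|ξ₃+ξ₄|) ≤ C·⟨ξ₁⟩^{2s-1}. -/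
/-!
Since ξ₁ + ξ₂ = -(ξ₃ + ξ₄), the numerator equals
(ξ₃ + ξ₄)(⟨ξ₁⟩^{2s} - ⟨ξ₃⟩^{2s}) + ξ₄(⟨ξ₂⟩^{2s} - ⟨ξ₁⟩^{2s}).
The first term is at most |ξ₃ + ξ₄|⟨ξ₁⟩^{2s}, and ⟨ξ₁⟩ ≤ 2|ξ₁| ≤ 2|ξ₁ + ξ₄|/c.
For the second, ⟨ξ₂⟩² - ⟨ξ₁⟩² = (ξ₁ - ξ₂)(ξ₃ + ξ₄), and t ↦ t^s is concave, so its slope on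
[⟨ξ₁⟩²/K², ∞) is at most sK²⟨ξ₁⟩^{2s-2}; finally |ξ₂ - ξ₁| ≤ |ξ₁ + ξ₄| + |ξ₁ + ξ₃| ≲ |ξ₁ + ξ₄|.
Integrality is used only to get |ξ₁| ≥ 1 from ξ₃ + ξ₄ ≠ 0.
-/

open Real

theorem rpow_le_rpow_add_mul_rpow_sub_one_mul_sub {s a b : ℝ} (hs0 : 0 ≤ s) (hs1 : s ≤ 1)
    (ha : 0 < a) (hab : a ≤ b) : b ^ s ≤ a ^ s + s * a ^ (s - 1) * (b - a) := by
  have hba : 0 ≤ b / a := div_nonneg (ha.le.trans hab) ha.le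
  have hbern : (1 + (b / a - 1)) ^ s ≤ 1 + s * (b / a - 1) :=
    rpow_one_add_le_one_add_mul_self (by linarith) hs0 hs1
  calc b ^ s = a ^ s * (1 + (b / a - 1)) ^ s := by
        rw [← mul_rpow ha.le (by linarith)]; field_simp; ring_nf
    _ ≤ a ^ s * (1 + s * (b / a - 1)) := by gcongr
    _ = a ^ s + s * a ^ (s - 1) * (b - a) := by
        rw [rpow_sub_one ha.ne']; field_simp

theorem abs_rpow_sub_rpow_le {s a b m : ℝ} (hs0 : 0 ≤ s) (hs1 : s ≤ 1) (hm : 0 < m)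
    (hma : m ≤ a) (hmb : m ≤ b) : |b ^ s - a ^ s| ≤ s * m ^ (s - 1) * |b - a| := by
  wlog hab : a ≤ b generalizing a b
  · rw [abs_sub_comm, abs_sub_comm b]; exact this hmb hma (le_of_not_ge hab)
  have hdec : a ^ (s - 1) ≤ m ^ (s - 1) := rpow_le_rpow_of_nonpos hm hma (by linarith)
  have hmono : a ^ s ≤ b ^ s := rpow_le_rpow (hm.le.trans hma) hab hs0
  rw [abs_of_nonneg (sub_nonneg.2 hmono), abs_of_nonneg (sub_nonneg.2 hab)]
  calc b ^ s - a ^ s ≤ s * a ^ (s - 1) * (b - a) := by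
        linarith [rpow_le_rpow_add_mul_rpow_sub_one_mul_sub hs0 hs1 (hm.trans_le hma) hab]
    _ ≤ s * m ^ (s - 1) * (b - a) := by gcongr

theorem div_rpow_sub_one_le {s L h : ℝ} (hs0 : 0 ≤ s) (hL : 1 ≤ L) (hh : 0 ≤ h) :
    (h / L) ^ (s - 1) ≤ L * h ^ (s - 1) := by
  have hL0 : 0 < L := one_pos.trans_le hL
  calc (h / L) ^ (s - 1) = L * h ^ (s - 1) / L ^ s := by
        rw [div_rpow hh hL0.le, rpow_sub_one hL0.ne']; field_simp
    _ ≤ L * h ^ (s - 1) := div_le_self (by positivity) (one_le_rpow hL hs0)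

theorem abs_one_add_sq_rpow_sub_le {s K x y : ℝ} (hs0 : 0 ≤ s) (hs1 : s ≤ 1) (hK : 1 ≤ K)
    (hxy : |x| ≤ K * |y|) :
    |(1 + y ^ 2) ^ s - (1 + x ^ 2) ^ s| ≤ s * K ^ 2 * (1 + x ^ 2) ^ (s - 1) * |y ^ 2 - x ^ 2| := by
  have hK2 : 1 ≤ K ^ 2 := one_le_pow₀ hK
  have hx : 0 < 1 + x ^ 2 := by positivity
  have hsq : x ^ 2 ≤ K ^ 2 * y ^ 2 := by
    rw [← sq_abs x, ← sq_abs y, ← mul_pow]; gcongr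
  have key := abs_rpow_sub_rpow_le hs0 hs1 (by positivity) (div_le_self hx.le hK2)
    (by rw [div_le_iff₀ (by positivity)]; nlinarith : (1 + x ^ 2) / K ^ 2 ≤ 1 + y ^ 2)
  calc _ ≤ s * ((1 + x ^ 2) / K ^ 2) ^ (s - 1) * |1 + y ^ 2 - (1 + x ^ 2)| := key
    _ ≤ s * (K ^ 2 * (1 + x ^ 2) ^ (s - 1)) * |1 + y ^ 2 - (1 + x ^ 2)| := by
        gcongr; exact div_rpow_sub_one_le hs0 hK2 hx.le
    _ = _ := by ring_nf

theorem one_add_sq_rpow_eq_sqrt_mul {x : ℝ} (s : ℝ) :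
    (1 + x ^ 2) ^ s = √(1 + x ^ 2) * √(1 + x ^ 2) ^ (2 * s - 1) := by
  have hr : 0 < √(1 + x ^ 2) := by positivity
  calc (1 + x ^ 2) ^ s = √(1 + x ^ 2) ^ (2 * s) := by
        rw [← rpow_div_two_eq_sqrt _ (by positivity)]; ring_nf
    _ = _ := by rw [rpow_sub_one hr.ne']; field_simp

theorem one_add_sq_rpow_le_two_mul_abs {x : ℝ} (s : ℝ) (hx : 1 ≤ |x|) :
    (1 + x ^ 2) ^ s ≤ 2 * |x| * √(1 + x ^ 2) ^ (2 * s - 1) := by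
  rw [one_add_sq_rpow_eq_sqrt_mul]
  gcongr
  rw [show 2 * |x| = √((2 * |x|) ^ 2) from (sqrt_sq (by positivity)).symm]
  gcongr
  nlinarith [sq_abs x]

theorem abs_mul_one_add_sq_rpow_sub_one_le (x s : ℝ) :
    |x| * (1 + x ^ 2) ^ (s - 1) ≤ √(1 + x ^ 2) ^ (2 * s - 1) := by
  have hr : 0 < √(1 + x ^ 2) := by positivity
  calc |x| * (1 + x ^ 2) ^ (s - 1) ≤ √(1 + x ^ 2) * (1 + x ^ 2) ^ (s - 1) := by
        gcongr; exact abs_le_sqrt (by linarith)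
    _ = √(1 + x ^ 2) ^ (2 * s - 1) := by
        rw [one_add_sq_rpow_eq_sqrt_mul, rpow_sub_one hr.ne',
          show 2 * (s - 1) = 2 * s - 1 - 1 by ring, rpow_sub_one hr.ne']
        field_simp

section Multiplier

variable {s c K x₁ x₂ x₃ x₄ : ℝ}

theorem mul_abs_sub_le_mul_abs_add (hc : 0 ≤ c) (hsum : x₁ + x₂ + x₃ + x₄ = 0) (h3 : |x₃| ≤ |x₁|)
    (hp : c * |x₁| ≤ |x₁ + x₄|) : c * |x₂ - x₁| ≤ (c + 2) * |x₁ + x₄| := by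
  have h : |x₂ - x₁| ≤ |x₁ + x₄| + (|x₁| + |x₃|) := by
    rw [show x₂ - x₁ = -(x₁ + x₄) - (x₁ + x₃) by linear_combination hsum, ← abs_neg (x₁ + x₄)]
    linarith [abs_sub (-(x₁ + x₄)) (x₁ + x₃), abs_add_le x₁ x₃]
  nlinarith

theorem multiplier_first_term_le (hs0 : 0 ≤ s) (hc : 0 ≤ c) (hx₁ : 1 ≤ |x₁|)
    (h3 : |x₃| ≤ |x₁|) (hp : c * |x₁| ≤ |x₁ + x₄|) :
    c * |(1 + x₁ ^ 2) ^ s - (1 + x₃ ^ 2) ^ s|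
      ≤ 2 * √(1 + x₁ ^ 2) ^ (2 * s - 1) * |x₁ + x₄| := by
  have hA : (1 + x₃ ^ 2) ^ s ≤ (1 + x₁ ^ 2) ^ s :=
    rpow_le_rpow (by positivity) (by linarith [sq_le_sq.2 h3]) hs0
  have hA₃ : 0 ≤ (1 + x₃ ^ 2) ^ s := by positivity
  have hA₁ := one_add_sq_rpow_le_two_mul_abs s hx₁
  rw [abs_of_nonneg (sub_nonneg.2 hA)]
  calc c * ((1 + x₁ ^ 2) ^ s - (1 + x₃ ^ 2) ^ s)
      ≤ c * (2 * |x₁| * √(1 + x₁ ^ 2) ^ (2 * s - 1)) := by gcongr; linarith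
    _ = 2 * √(1 + x₁ ^ 2) ^ (2 * s - 1) * (c * |x₁|) := by ring
    _ ≤ 2 * √(1 + x₁ ^ 2) ^ (2 * s - 1) * |x₁ + x₄| := by gcongr

theorem multiplier_second_term_le (hs0 : 0 ≤ s) (hs1 : s ≤ 1) (hc : 0 ≤ c) (hK : 1 ≤ K)
    (hsum : x₁ + x₂ + x₃ + x₄ = 0) (h12 : |x₁| ≤ K * |x₂|) (h3 : |x₃| ≤ |x₁|)
    (h4 : |x₄| ≤ |x₁|) (hp : c * |x₁| ≤ |x₁ + x₄|) :
    c * (|x₄| * |(1 + x₂ ^ 2) ^ s - (1 + x₁ ^ 2) ^ s|)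
      ≤ K ^ 2 * (c + 2) * √(1 + x₁ ^ 2) ^ (2 * s - 1) * (|x₁ + x₄| * |x₃ + x₄|) := by
  have hsq : |x₂ ^ 2 - x₁ ^ 2| = |x₂ - x₁| * |x₃ + x₄| := by
    rw [abs_sub_comm x₂ x₁, ← abs_mul]; congr 1; linear_combination (x₂ - x₁) * hsum
  calc c * (|x₄| * |(1 + x₂ ^ 2) ^ s - (1 + x₁ ^ 2) ^ s|)
      ≤ c * (|x₁| * (s * K ^ 2 * (1 + x₁ ^ 2) ^ (s - 1) * |x₂ ^ 2 - x₁ ^ 2|)) := by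
        gcongr; exact abs_one_add_sq_rpow_sub_le hs0 hs1 hK h12
    _ = s * K ^ 2 * (|x₁| * (1 + x₁ ^ 2) ^ (s - 1)) * (c * |x₂ - x₁|) * |x₃ + x₄| := by
        rw [hsq]; ring
    _ ≤ 1 * K ^ 2 * √(1 + x₁ ^ 2) ^ (2 * s - 1) * ((c + 2) * |x₁ + x₄|) * |x₃ + x₄| := by
        gcongr ?_ * _ * ?_ * ?_ * _
        · exact abs_mul_one_add_sq_rpow_sub_one_le x₁ s
        · exact mul_abs_sub_le_mul_abs_add hc hsum h3 hp
    _ = _ := by ring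

theorem abs_multiplier_numerator_le (hs0 : 0 ≤ s) (hs1 : s ≤ 1) (hc : 0 < c) (hK : 1 ≤ K)
    (hsum : x₁ + x₂ + x₃ + x₄ = 0) (hx₁ : 1 ≤ |x₁|) (h12 : |x₁| ≤ K * |x₂|)
    (h3 : |x₃| ≤ |x₁|) (h4 : |x₄| ≤ |x₁|) (hp : c * |x₁| ≤ |x₁ + x₄|) :
    |(x₁ + x₂) * (1 + x₃ ^ 2) ^ s + (x₃ + x₄) * (1 + x₁ ^ 2) ^ s
        + x₄ * ((1 + x₂ ^ 2) ^ s - (1 + x₁ ^ 2) ^ s)|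
      ≤ (2 + K ^ 2 * (c + 2)) / c * √(1 + x₁ ^ 2) ^ (2 * s - 1) * (|x₁ + x₄| * |x₃ + x₄|) := by
  have hsplit : (x₁ + x₂) * (1 + x₃ ^ 2) ^ s + (x₃ + x₄) * (1 + x₁ ^ 2) ^ s
        + x₄ * ((1 + x₂ ^ 2) ^ s - (1 + x₁ ^ 2) ^ s)
      = (x₃ + x₄) * ((1 + x₁ ^ 2) ^ s - (1 + x₃ ^ 2) ^ s)
        + x₄ * ((1 + x₂ ^ 2) ^ s - (1 + x₁ ^ 2) ^ s) := by
    linear_combination (1 + x₃ ^ 2) ^ s * hsum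
  have h₁ := mul_le_mul_of_nonneg_left (multiplier_first_term_le hs0 hc.le hx₁ h3 hp)
    (abs_nonneg (x₃ + x₄))
  have h₂ := multiplier_second_term_le hs0 hs1 hc.le hK hsum h12 h3 h4 hp
  rw [div_mul_eq_mul_div, div_mul_eq_mul_div, le_div_iff₀' hc, hsplit]
  calc c * |(x₃ + x₄) * ((1 + x₁ ^ 2) ^ s - (1 + x₃ ^ 2) ^ s)
        + x₄ * ((1 + x₂ ^ 2) ^ s - (1 + x₁ ^ 2) ^ s)|
      ≤ |x₃ + x₄| * (c * |(1 + x₁ ^ 2) ^ s - (1 + x₃ ^ 2) ^ s|)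
        + c * (|x₄| * |(1 + x₂ ^ 2) ^ s - (1 + x₁ ^ 2) ^ s|) := by
        rw [mul_left_comm, ← mul_add, ← abs_mul, ← abs_mul]; gcongr; exact abs_add_le _ _
    _ ≤ _ := by linarith

end Multiplier

theorem one_le_abs_intCast {n : ℤ} (hn : n ≠ 0) : 1 ≤ |(n : ℝ)| := by
  exact_mod_cast Int.one_le_abs hn

/-- Main part of case (ii) of the M₄ multiplier bound: on the hyperplane
ξ₁+ξ₂+ξ₃+ξ₄ = 0 with |ξ₁| ∼ |ξ₂| ≥ max{|ξ₃|,|ξ₄|}, ξ₃+ξ₄ ≠ 0,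
|ξ₁+ξ₄| ≳ |ξ₁| and |ξ₃+ξ₄| ≤ c'|ξ₁|, one has
|(ξ₁+ξ₂)⟨ξ₃⟩^{2s} + (ξ₃+ξ₄)⟨ξ₁⟩^{2s} + ξ₄(⟨ξ₂⟩^{2s}-⟨ξ₁⟩^{2s})|
  / (|ξ₁+ξ₄||ξ₃+ξ₄|) ≤ C⟨ξ₁⟩^{2s-1}, with ⟨ξ⟩^{2s} = (1+ξ²)^s. -/
theorem stmt_17 (s : ℝ) (hs0 : 0 < s) (hs : s < 1 / 2)
    (c K : ℝ) (hc : 0 < c) (hK : 1 ≤ K) :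
    ∃ c' C : ℝ, 0 < c' ∧ 0 < C ∧ ∀ ξ₁ ξ₂ ξ₃ ξ₄ : ℤ,
      ξ₁ + ξ₂ + ξ₃ + ξ₄ = 0 → ξ₃ + ξ₄ ≠ 0 →
      |(ξ₂ : ℝ)| ≤ K * |(ξ₁ : ℝ)| → |(ξ₁ : ℝ)| ≤ K * |(ξ₂ : ℝ)| →
      max |(ξ₃ : ℝ)| |(ξ₄ : ℝ)| ≤ |(ξ₁ : ℝ)| →
      c * |(ξ₁ : ℝ)| ≤ |(ξ₁ : ℝ) + ξ₄| →
      |(ξ₃ : ℝ) + ξ₄| ≤ c' * |(ξ₁ : ℝ)| →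
      |((ξ₁ : ℝ) + ξ₂) * (1 + (ξ₃ : ℝ) ^ 2) ^ s
          + ((ξ₃ : ℝ) + ξ₄) * (1 + (ξ₁ : ℝ) ^ 2) ^ s
          + (ξ₄ : ℝ) * ((1 + (ξ₂ : ℝ) ^ 2) ^ s - (1 + (ξ₁ : ℝ) ^ 2) ^ s)|
        / (|(ξ₁ : ℝ) + ξ₄| * |(ξ₃ : ℝ) + ξ₄|)
        ≤ C * Real.sqrt (1 + (ξ₁ : ℝ) ^ 2) ^ (2 * s - 1) := by
  refine ⟨1, (2 + K ^ 2 * (c + 2)) / c, one_pos, by positivity, ?_⟩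
  intro ξ₁ ξ₂ ξ₃ ξ₄ hsum hq _ h12 hmax hp _
  obtain ⟨h3, h4⟩ := max_le_iff.1 hmax
  have hx₁ : 1 ≤ |(ξ₁ : ℝ)| := by
    by_cases h : ξ₃ = 0
    · exact (one_le_abs_intCast (by omega : ξ₄ ≠ 0)).trans h4
    · exact (one_le_abs_intCast h).trans h3
  have hp0 : 0 < |(ξ₁ : ℝ) + ξ₄| := (mul_pos hc (one_pos.trans_le hx₁)).trans_le hp
  have hq0 : 0 < |(ξ₃ : ℝ) + ξ₄| := abs_pos.2 (by exact_mod_cast hq)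
  rw [div_le_iff₀ (mul_pos hp0 hq0)]
  exact abs_multiplier_numerator_le hs0.le (by linarith) hc hK (by exact_mod_cast hsum)
    hx₁ h12 h3 h4 hp
end
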